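/- The function m ↦ V_m is differentiable on (0, ∞), and for every m > 0 its derivative equals d/dm V_m = −16πm + 4π ∫_{2m}^∞ s (1 + s² − 2m s^(−1))^(−3/2) ds. -/

import Mathlib

/-!
Let `V(m, s) = 1 + s² - 2m/s` and `F_R(m) = Vol_m(R) - Vol₀(R)`, so that `V_m = lim_R F_R(m)`.
Differentiating under the integral sign, with the moving lower limit `2m` contributing
`-2 · (2m)² / √(V(m, 2m)) = -4m`, gives `F_R'(m) = -16πm + 4π ∫_{2m}^R s V(m, s)^(-3/2) ds`.
For `s ≥ 2m` one has `V(m, s) ≥ s²`, so the integrand is at most `s⁻²`: the derivatives converge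
uniformly in `m` at rate `4π/R`, and the integrands of `Vol_m` and `Vol₀` differ by at most `m s⁻²`
(mean value theorem in the mass), so `F_R(m)` converges. Uniform convergence of the derivatives
then lets one differentiate the limit.
-/

open Real MeasureTheory Filter

/-- Volume of the centered coordinate ball of radius `R` in hyperbolic space. -/
noncomputable def hypVol (R : ℝ) : ℝ :=
  4 * π * ∫ s in (0:ℝ)..R, s ^ 2 / Real.sqrt (1 + s ^ 2)

/-- Volume of the centered coordinate ball of radius `R` in
Schwarzschild-anti-deSitter of mass `m`. -/
noncomputable def sAdSVol (m R : ℝ) : ℝ :=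
  4 * π * ∫ s in (2 * m)..R, s ^ 2 / Real.sqrt (1 + s ^ 2 - 2 * m / s)

/-- The renormalized volume `V_m = lim_{R→∞} (Vol_m(R) - Vol₀(R))` of
Schwarzschild-anti-deSitter of mass `m`. -/
noncomputable def renormVol (m : ℝ) : ℝ :=
  limUnder atTop (fun R => sAdSVol m R - hypVol R)

open Set Topology Function Asymptotics

theorem ContinuousOn.uncurry_left_of_forall_mem {α β γ : Type*} [TopologicalSpace α]
    [TopologicalSpace β] [TopologicalSpace γ] {f : α → β → γ} {Ω : Set (α × β)}
    (hf : ContinuousOn (uncurry f) Ω) {x : α} {K : Set β} (hK : ∀ s ∈ K, (x, s) ∈ Ω) :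
    ContinuousOn (f x) K :=
  hf.comp (continuousOn_const.prodMk continuousOn_id) hK

theorem eventually_forall_uIcc_mem {a : ℝ → ℝ} {x₀ : ℝ} (ha : ContinuousAt a x₀)
    {V : Set (ℝ × ℝ)} (hV : V ∈ 𝓝 (x₀, a x₀)) :
    ∀ᶠ x in 𝓝 x₀, ∀ s ∈ uIcc (a x) (a x₀), (x, s) ∈ V := by
  obtain ⟨ε, hε, hball⟩ := Metric.mem_nhds_iff.1 hV
  filter_upwards [Metric.ball_mem_nhds x₀ hε, ha (Metric.ball_mem_nhds (a x₀) hε)]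
    with x hx hax s hs
  apply hball
  rw [← ball_prod_same]
  exact ⟨hx, (convex_iff_ordConnected.1 (convex_ball _ _)).uIcc_subset hax
    (Metric.mem_ball_self hε) hs⟩

section LeibnizRule

variable {E : Type*} [NormedAddCommGroup E] [NormedSpace ℝ E] [CompleteSpace E]

theorem hasDerivAt_integral_lowerLimit_of_continuousAt {F : ℝ → ℝ → E} {a : ℝ → ℝ}
    {a' x₀ : ℝ} (ha : HasDerivAt a a' x₀) (hF : ContinuousAt (uncurry F) (x₀, a x₀))
    (hint : ∀ᶠ x in 𝓝 x₀, IntervalIntegrable (F x) volume (a x) (a x₀)) :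
    HasDerivAt (fun x => ∫ s in a x..a x₀, F x s) (-(a' • F x₀ (a x₀))) x₀ := by
  set F₀ := F x₀ (a x₀)
  have hlin : HasDerivAt (fun x => (a x₀ - a x) • F₀) (-(a' • F₀)) x₀ := by
    simpa using (ha.const_sub (a x₀)).smul_const F₀
  -- the error of freezing `F` at `(x₀, a x₀)` is `o(1)` on an interval of length `O(x - x₀)`
  have hrem : (fun x => ∫ s in a x..a x₀, (F x s - F₀)) =o[𝓝 x₀] (fun x => x - x₀) := by
    refine IsLittleO.trans_isBigO (isLittleO_iff.2 fun ε hε => ?_) ha.isBigO_sub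
    have hnear : ∀ᶠ p in 𝓝 (x₀, a x₀), ‖uncurry F p - F₀‖ ≤ ε :=
      (hF.sub continuousAt_const).norm.eventually (ge_mem_nhds (by simpa using hε))
    filter_upwards [eventually_forall_uIcc_mem ha.continuousAt hnear] with x hx
    calc ‖∫ s in a x..a x₀, (F x s - F₀)‖ ≤ ε * |a x₀ - a x| :=
          intervalIntegral.norm_integral_le_of_norm_le_const fun s hs =>
            hx s (uIoc_subset_uIcc hs)
      _ = ε * ‖a x - a x₀‖ := by rw [Real.norm_eq_abs, abs_sub_comm]
  have hrem' : HasDerivAt (fun x => ∫ s in a x..a x₀, (F x s - F₀)) 0 x₀ := by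
    rw [hasDerivAt_iff_isLittleO]
    simpa using hrem
  refine (hlin.add hrem').congr_of_eventuallyEq ?_ |>.congr_deriv (add_zero _)
  filter_upwards [hint] with x hx
  rw [Pi.add_apply, intervalIntegral.integral_sub hx intervalIntegrable_const,
    intervalIntegral.integral_const]
  abel

theorem hasDerivAt_integral_lowerLimit {F F' : ℝ → ℝ → E} {Ω : Set (ℝ × ℝ)} (hΩ : IsOpen Ω)
    (hF : ContinuousOn (uncurry F) Ω) (hF' : ContinuousOn (uncurry F') Ω)
    (hFF' : ∀ x s, (x, s) ∈ Ω → HasDerivAt (fun x => F x s) (F' x s) x)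
    {a : ℝ → ℝ} {a' b x₀ : ℝ} (ha : HasDerivAt a a' x₀)
    (hx₀ : ∀ s ∈ uIcc (a x₀) b, (x₀, s) ∈ Ω) :
    HasDerivAt (fun x => ∫ s in a x..b, F x s)
      ((∫ s in a x₀..b, F' x₀ s) - a' • F x₀ (a x₀)) x₀ := by
  obtain ⟨δ, hδ, hδΩ⟩ :
      ∃ δ > 0, ∀ x ∈ Metric.closedBall x₀ δ, ∀ s ∈ uIcc (a x₀) b, (x, s) ∈ Ω :=
    Metric.nhds_basis_closedBall.eventually_iff.1 <|
      isCompact_uIcc.eventually_forall_of_forall_eventually fun s hs => hΩ.mem_nhds (hx₀ s hs)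
  have hx₀δ := Metric.mem_closedBall_self (x := x₀) hδ.le
  obtain ⟨C, hC⟩ := ((isCompact_closedBall x₀ δ).prod isCompact_uIcc).exists_bound_of_continuousOn
    (hF'.mono fun p hp => hδΩ p.1 hp.1 p.2 hp.2)
  have hΩ₀ : Ω ∈ 𝓝 (x₀, a x₀) := hΩ.mem_nhds (hx₀ _ left_mem_uIcc)
  have hint : ∀ᶠ x in 𝓝 x₀, IntervalIntegrable (F x) volume (a x) (a x₀) :=
    (eventually_forall_uIcc_mem ha.continuousAt hΩ₀).mono fun _ hx =>
      (hF.uncurry_left_of_forall_mem hx).intervalIntegrable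
  have hlower := hasDerivAt_integral_lowerLimit_of_continuousAt ha (hF.continuousAt hΩ₀) hint
  have hfixed := (intervalIntegral.hasDerivAt_integral_of_dominated_loc_of_deriv_le
    (μ := volume) (a := a x₀) (b := b) (bound := fun _ => C) (Metric.ball_mem_nhds x₀ hδ)
    (Metric.eventually_nhds_iff_ball.2 ⟨δ, hδ, fun x hx =>
      ((hF.uncurry_left_of_forall_mem (hδΩ x (Metric.ball_subset_closedBall hx))).mono
        uIoc_subset_uIcc).aestronglyMeasurable measurableSet_uIoc⟩)
    (hF.uncurry_left_of_forall_mem (hδΩ x₀ hx₀δ)).intervalIntegrable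
    ((hF'.uncurry_left_of_forall_mem (hδΩ x₀ hx₀δ)).mono uIoc_subset_uIcc
      |>.aestronglyMeasurable measurableSet_uIoc)
    (ae_of_all _ fun s hs x hx =>
      hC (x, s) ⟨Metric.ball_subset_closedBall hx, uIoc_subset_uIcc hs⟩)
    intervalIntegrable_const
    (ae_of_all _ fun s hs x hx =>
      hFF' x s (hδΩ x (Metric.ball_subset_closedBall hx) s (uIoc_subset_uIcc hs)))).2
  refine ((hlower.add hfixed).congr_of_eventuallyEq ?_).congr_deriv (by abel)
  filter_upwards [hint, Metric.closedBall_mem_nhds x₀ hδ] with x hx hxδ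
  exact (intervalIntegral.integral_add_adjacent_intervals hx
    (hF.uncurry_left_of_forall_mem (hδΩ x hxδ)).intervalIntegrable).symm

end LeibnizRule

noncomputable section

def sAdSPotential (m s : ℝ) : ℝ := 1 + s ^ 2 - 2 * m / s

def volDensity (m s : ℝ) : ℝ := s ^ 2 / √(sAdSPotential m s)

def volDensityDeriv (m s : ℝ) : ℝ := s * sAdSPotential m s ^ (-(3:ℝ)/2)

def sAdSDomain : Set (ℝ × ℝ) := {p | 0 < p.2 ∧ 0 < sAdSPotential p.1 p.2}

end

theorem continuousOn_sAdSPotential :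
    ContinuousOn (uncurry sAdSPotential) {p : ℝ × ℝ | p.2 ≠ 0} :=
  continuousOn_const.add (by fun_prop) |>.sub <|
    (continuousOn_const.mul continuous_fst.continuousOn).div continuous_snd.continuousOn
      fun _ hp => hp

theorem isOpen_sAdSDomain : IsOpen sAdSDomain :=
  continuousOn_sAdSPotential.mono (fun _ hp => ne_of_gt hp) |>.isOpen_inter_preimage
    (isOpen_lt continuous_const continuous_snd) isOpen_Ioi

theorem continuousOn_volDensity : ContinuousOn (uncurry volDensity) sAdSDomain :=
  (continuous_snd.pow 2).continuousOn.div
    (continuousOn_sAdSPotential.mono fun _ hp => ne_of_gt hp.1).sqrt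
    fun _ hp => (sqrt_pos.2 hp.2).ne'

theorem continuousOn_volDensityDeriv : ContinuousOn (uncurry volDensityDeriv) sAdSDomain :=
  continuous_snd.continuousOn.mul <|
    (continuousOn_sAdSPotential.mono fun _ hp => ne_of_gt hp.1).rpow_const
      fun _ hp => Or.inl hp.2.ne'

theorem rpow_neg_three_halves {x : ℝ} (hx : 0 ≤ x) : x ^ (-(3:ℝ)/2) = (x * √x)⁻¹ := by
  rw [show (-(3:ℝ)/2) = -(1 + 1/2) by norm_num, rpow_neg hx, rpow_add' hx (by norm_num),
    rpow_one, ← sqrt_eq_rpow]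

theorem hasDerivAt_volDensity {m s : ℝ} (hV : 0 < sAdSPotential m s) :
    HasDerivAt (fun m => volDensity m s) (volDensityDeriv m s) m := by
  have hV' : HasDerivAt (fun m => sAdSPotential m s) (-(2 / s)) m := by
    simpa [sAdSPotential, mul_div_right_comm]
      using ((hasDerivAt_id m).const_mul (2 / s)).const_sub (1 + s ^ 2)
  refine ((hasDerivAt_const m (s ^ 2)).div (hV'.sqrt hV.ne') (sqrt_pos.2 hV).ne').congr_deriv ?_
  rw [volDensityDeriv, rpow_neg_three_halves hV.le, sq_sqrt hV.le]
  field_simp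
  ring

theorem sq_le_sAdSPotential {m s : ℝ} (hs : 0 < s) (h : 2 * m ≤ s) :
    s ^ 2 ≤ sAdSPotential m s := by
  have : 2 * m / s ≤ 1 := (div_le_one hs).2 h
  unfold sAdSPotential
  linarith

theorem mem_sAdSDomain {m s : ℝ} (hs : 0 < s) (h : 2 * m ≤ s) : (m, s) ∈ sAdSDomain :=
  ⟨hs, (pow_pos hs 2).trans_le (sq_le_sAdSPotential hs h)⟩

theorem ContinuousOn.continuousOn_Ici_of_sAdSDomain {f : ℝ → ℝ → ℝ}
    (hf : ContinuousOn (uncurry f) sAdSDomain) {m c : ℝ} (hc : 0 < c) (h : 2 * m ≤ c) :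
    ContinuousOn (f m) (Ici c) :=
  hf.uncurry_left_of_forall_mem fun _ hs => mem_sAdSDomain (hc.trans_le hs) (h.trans hs)

theorem volDensity_two_mul_self {m : ℝ} (hm : 0 ≤ m) : volDensity m (2 * m) = 2 * m := by
  rcases hm.eq_or_lt with rfl | hm
  · simp [volDensity]
  · have hV : sAdSPotential m (2 * m) = (2 * m) ^ 2 := by
      unfold sAdSPotential
      field_simp
      ring
    rw [volDensity, hV, sqrt_sq (by positivity)]
    field_simp

theorem norm_volDensityDeriv_le {m s : ℝ} (hs : 0 < s) (h : 2 * m ≤ s) :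
    ‖volDensityDeriv m s‖ ≤ s ^ (-2:ℝ) := by
  have hV := sq_le_sAdSPotential hs h
  have hpow : sAdSPotential m s ^ (-(3:ℝ)/2) ≤ s ^ (-3:ℝ) :=
    calc sAdSPotential m s ^ (-(3:ℝ)/2) ≤ (s ^ 2) ^ (-(3:ℝ)/2) :=
          rpow_le_rpow_of_nonpos (by positivity) hV (by norm_num)
      _ = s ^ (-3:ℝ) := by
          rw [← rpow_natCast, ← rpow_mul hs.le]
          norm_num
  rw [volDensityDeriv, norm_mul, Real.norm_of_nonneg hs.le,
    Real.norm_of_nonneg (rpow_nonneg ((pow_pos hs 2).le.trans hV) _)]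
  calc s * sAdSPotential m s ^ (-(3:ℝ)/2) ≤ s * s ^ (-3:ℝ) := by gcongr
    _ = s ^ (-2:ℝ) := by
      rw [← rpow_one_add' hs.le (by norm_num)]
      norm_num

theorem integrableOn_volDensityDeriv {m c : ℝ} (hc : 0 < c) (h : 2 * m ≤ c) :
    IntegrableOn (volDensityDeriv m) (Ioi c) :=
  (integrableOn_Ioi_rpow_of_lt (by norm_num) hc).mono'
    ((continuousOn_volDensityDeriv.continuousOn_Ici_of_sAdSDomain hc h).mono
      Ioi_subset_Ici_self |>.aestronglyMeasurable measurableSet_Ioi)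
    ((ae_restrict_mem measurableSet_Ioi).mono fun s hs =>
      norm_volDensityDeriv_le (hc.trans hs) (h.trans hs.le))

theorem norm_integral_Ioi_volDensityDeriv_le {m R : ℝ} (hR : 0 < R) (h : 2 * m ≤ R) :
    ‖∫ s in Ioi R, volDensityDeriv m s‖ ≤ R⁻¹ :=
  calc ‖∫ s in Ioi R, volDensityDeriv m s‖ ≤ ∫ s in Ioi R, s ^ (-2:ℝ) :=
        norm_integral_le_of_norm_le (integrableOn_Ioi_rpow_of_lt (by norm_num) hR)
          ((ae_restrict_mem measurableSet_Ioi).mono fun s hs =>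
            norm_volDensityDeriv_le (hR.trans hs) (h.trans hs.le))
    _ = R⁻¹ := by
      rw [integral_Ioi_rpow_of_lt (by norm_num) hR]
      norm_num [rpow_neg_one]

theorem norm_volDensity_sub_le {m s : ℝ} (hm : 0 ≤ m) (hs : 0 < s) (h : 2 * m ≤ s) :
    ‖volDensity m s - volDensity 0 s‖ ≤ s ^ (-2:ℝ) * m := by
  have hderiv : ∀ μ ∈ Icc 0 m,
      HasDerivWithinAt (fun μ => volDensity μ s) (volDensityDeriv μ s) (Icc 0 m) μ :=
    fun μ hμ =>
      (hasDerivAt_volDensity (mem_sAdSDomain hs (by linarith [hμ.2])).2).hasDerivWithinAt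
  have hbound : ∀ μ ∈ Icc 0 m, ‖volDensityDeriv μ s‖ ≤ s ^ (-2:ℝ) := fun μ hμ =>
    norm_volDensityDeriv_le hs (by linarith [hμ.2])
  simpa [Real.norm_of_nonneg hm]
    using (convex_Icc 0 m).norm_image_sub_le_of_norm_hasDerivWithin_le
      hderiv hbound (left_mem_Icc.2 hm) (right_mem_Icc.2 hm)

theorem volDensity_zero : volDensity 0 = fun s => s ^ 2 / √(1 + s ^ 2) := by
  ext s
  simp [volDensity, sAdSPotential]

theorem continuous_volDensity_zero : Continuous (volDensity 0) := by
  rw [volDensity_zero]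
  exact (continuous_pow 2).div (by fun_prop) fun s => (sqrt_pos.2 (by positivity)).ne'

theorem integrableOn_volDensity_sub {m : ℝ} (hm : 0 < m) :
    IntegrableOn (fun s => volDensity m s - volDensity 0 s) (Ioi (2 * m)) :=
  ((integrableOn_Ioi_rpow_of_lt (by norm_num) (by positivity)).mul_const m).mono'
    (((continuousOn_volDensity.continuousOn_Ici_of_sAdSDomain (by positivity) le_rfl).sub
      continuous_volDensity_zero.continuousOn).mono Ioi_subset_Ici_self
      |>.aestronglyMeasurable measurableSet_Ioi)
    ((ae_restrict_mem measurableSet_Ioi).mono fun s hs =>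
      norm_volDensity_sub_le hm.le ((by positivity : (0:ℝ) < 2 * m).trans hs) hs.le)

theorem tendsto_sAdSVol_sub_hypVol {m : ℝ} (hm : 0 < m) :
    Tendsto (fun R => sAdSVol m R - hypVol R) atTop (𝓝 (4 * π *
      ((∫ s in Ioi (2 * m), (volDensity m s - volDensity 0 s))
        - ∫ s in 0..2 * m, volDensity 0 s))) := by
  have hlim :=
    intervalIntegral_tendsto_integral_Ioi (2 * m) (integrableOn_volDensity_sub hm) tendsto_id
  refine ((hlim.sub_const _).const_mul (4 * π)).congr' ?_
  filter_upwards [eventually_ge_atTop (2 * m)] with R hR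
  have hint₀ : ∀ a b, IntervalIntegrable (volDensity 0) volume a b :=
    continuous_volDensity_zero.intervalIntegrable
  have hint : IntervalIntegrable (volDensity m) volume (2 * m) R :=
    ((continuousOn_volDensity.continuousOn_Ici_of_sAdSDomain (by positivity) le_rfl).mono
      (uIcc_of_le hR ▸ Icc_subset_Ici_self)).intervalIntegrable
  have hsplit :=
    intervalIntegral.integral_add_adjacent_intervals (hint₀ 0 (2 * m)) (hint₀ (2 * m) R)
  have hvol : sAdSVol m R = 4 * π * ∫ s in 2 * m..R, volDensity m s := rfl
  rw [id, intervalIntegral.integral_sub hint (hint₀ _ _), hvol, hypVol, ← volDensity_zero,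
    ← hsplit]
  ring

theorem hasDerivAt_sAdSVol {m R : ℝ} (hm : 0 < m) (hR : 2 * m ≤ R) :
    HasDerivAt (fun m => sAdSVol m R)
      (-16 * π * m + 4 * π * ∫ s in 2 * m..R, volDensityDeriv m s) m := by
  have hleibniz := hasDerivAt_integral_lowerLimit isOpen_sAdSDomain continuousOn_volDensity
    continuousOn_volDensityDeriv (fun _ _ h => hasDerivAt_volDensity h.2)
    ((hasDerivAt_id' m).const_mul 2) fun s hs =>
      mem_sAdSDomain (by linarith [(uIcc_of_le hR ▸ hs).1]) (uIcc_of_le hR ▸ hs).1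
  refine (hleibniz.const_mul (4 * π)).congr_deriv ?_
  rw [volDensity_two_mul_self hm.le, smul_eq_mul]
  ring

theorem tendstoUniformlyOn_sAdSVol_deriv (M : ℝ) :
    TendstoUniformlyOn
      (fun R m => -16 * π * m + 4 * π * ∫ s in 2 * m..R, volDensityDeriv m s)
      (fun m => -16 * π * m + 4 * π * ∫ s in Ioi (2 * m), volDensityDeriv m s)
      atTop (Ioo 0 M) := by
  rw [Metric.tendstoUniformlyOn_iff]
  intro ε hε
  filter_upwards [eventually_ge_atTop (2 * M), eventually_gt_atTop (4 * π / ε)]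
    with R hRM hRε m hm
  have hR : 0 < R := (by positivity : 0 < 4 * π / ε).trans hRε
  have h2m : 2 * m ≤ R := by linarith [hm.2]
  rw [dist_eq_norm, add_sub_add_left_eq_sub, ← mul_sub, ← intervalIntegral.integral_Ioi_sub_Ioi
    (integrableOn_volDensityDeriv (by linarith [hm.1]) le_rfl) h2m, sub_sub_cancel, norm_mul,
    Real.norm_of_nonneg (by positivity)]
  calc 4 * π * ‖∫ s in Ioi R, volDensityDeriv m s‖ ≤ 4 * π * R⁻¹ := by
        gcongr
        exact norm_integral_Ioi_volDensityDeriv_le hR h2m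
    _ < ε := by
      rw [← div_eq_mul_inv, div_lt_iff₀ hR, mul_comm ε]
      exact (div_lt_iff₀ hε).1 hRε

/-- `m ↦ V_m` is differentiable on `(0,∞)` with derivative
`-16πm + 4π ∫_{2m}^∞ s (1+s²-2m/s)^(-3/2) ds`. -/
theorem renormVol_hasDerivAt (m : ℝ) (hm : 0 < m) :
    HasDerivAt renormVol
      (-16 * π * m
        + 4 * π * ∫ s in Set.Ioi (2 * m), s * (1 + s ^ 2 - 2 * m / s) ^ (-(3:ℝ)/2)) m := by
  refine hasDerivAt_of_tendstoUniformlyOn (f := fun R m => sAdSVol m R - hypVol R) isOpen_Ioo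
    (tendstoUniformlyOn_sAdSVol_deriv (m + 1)) ?_
    (fun μ hμ => tendsto_nhds_limUnder ⟨_, tendsto_sAdSVol_sub_hypVol hμ.1⟩) ⟨hm, lt_add_one m⟩
  filter_upwards [eventually_ge_atTop (2 * (m + 1))] with R hR μ hμ
  exact (hasDerivAt_sAdSVol hμ.1 (by linarith [hμ.2])).sub_const (hypVol R)
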